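/- Let E be a strongly connected finite directed graph with no sources and n ≥ 1. The connected components of E(n) are exactly the sets {μ : μ a path of length < n with s(μ) ∈ Λ}, indexed by the equivalence classes Λ of ∼_n on E^0. -/

import Mathlib

/-- A directed graph: vertices, edges, range and source maps. -/
structure DGraph where
  V : Type
  E : Type
  r : E → V
  s : E → V

namespace DGraph

variable {G : DGraph}

/-- A path in a directed graph: a word of composable edges together with a source vertex
(so that length-zero paths are vertices). -/
structure Path (G : DGraph) where
  src : G.V
  edges : List G.E
  chain : List.Chain' (fun a b => G.s a = G.r b) edges
  srcEq : ∀ a ∈ edges.getLast?, G.s a = src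

/-- The range of a path. -/
def Path.rng (p : G.Path) : G.V := p.edges.head?.elim p.src G.r

/-- The length of a path. -/
def Path.length (p : G.Path) : ℕ := p.edges.length

/-- The length-zero path at a vertex. -/
def Path.nil (G : DGraph) (v : G.V) : G.Path :=
  ⟨v, [], List.isChain_nil, by simp⟩

@[simp] theorem Path.length_nil (v : G.V) : (Path.nil G v).length = 0 := rfl

/-- Prepend an edge to a path. -/
def Path.cons (e : G.E) (p : G.Path) (h : p.rng = G.s e) : G.Path where
  src := p.src
  edges := e :: p.edges
  chain := by
    unfold List.Chain'; rw [List.isChain_cons]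
    refine ⟨fun b hb => ?_, p.chain⟩
    rw [← h]
    simp [Path.rng, Option.mem_def.mp hb]
  srcEq := by
    intro a ha
    cases hp : p.edges with
    | nil =>
      rw [hp] at ha
      simp only [List.getLast?_singleton, Option.mem_def, Option.some.injEq] at ha
      subst ha
      have h0 : p.rng = p.src := by simp [Path.rng, hp]
      rw [← h, h0]
    | cons f t =>
      apply p.srcEq
      rw [hp]
      rw [hp, List.getLast?_cons_cons] at ha
      exact ha

@[simp] theorem Path.length_cons (e : G.E) (p : G.Path) (h : p.rng = G.s e) :
    (Path.cons e p h).length = p.length + 1 := rfl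

/-- Remove the first edge of a path. -/
def Path.tail (p : G.Path) : G.Path where
  src := p.src
  edges := p.edges.tail
  chain := p.chain.tail
  srcEq := by
    intro a ha
    apply p.srcEq
    cases hp : p.edges with
    | nil => rw [hp] at ha; simp at ha
    | cons f t =>
      rw [hp] at ha
      simp only [List.tail_cons] at ha
      cases t with
      | nil => simp at ha
      | cons g u => rw [List.getLast?_cons_cons]; exact ha

@[simp] theorem Path.length_tail (p : G.Path) : p.tail.length = p.length - 1 := by
  simp [Path.tail, Path.length]

/-- The initial segment of a path consisting of its first `k` edges. -/
def Path.take (p : G.Path) (k : ℕ) : G.Path where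
  src := (p.edges.drop k).head?.elim p.src G.r
  edges := p.edges.take k
  chain := p.chain.take k
  srcEq := by
    intro a ha
    have hc : List.Chain' (fun a b => G.s a = G.r b) (p.edges.take k ++ p.edges.drop k) := by
      rw [List.take_append_drop]; exact p.chain
    unfold List.Chain' at hc; rw [List.isChain_append] at hc
    obtain ⟨-, -, hadj⟩ := hc
    cases hd : p.edges.drop k with
    | nil =>
      have htake : p.edges.take k = p.edges := by
        have h1 := List.take_append_drop k p.edges
        rw [hd, List.append_nil] at h1
        exact h1
      simp only [List.head?_nil, Option.elim]
      exact p.srcEq a (htake ▸ ha)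
    | cons f t =>
      simp only [List.head?_cons, Option.elim]
      exact hadj a ha f (by rw [hd]; simp)

/-- `[μ]_n` : the initial segment of `μ` of length `|μ| mod n`. -/
def Path.trunc (m : ℕ) (p : G.Path) : G.Path := p.take (p.length % m)

/-- Concatenation of paths, `p` followed after `q` (so `p.append q` has range the range of `p`
and source the source of `q`). -/
def Path.append (p q : G.Path) (h : p.src = q.rng) : G.Path where
  src := q.src
  edges := p.edges ++ q.edges
  chain := by
    unfold List.Chain'; rw [List.isChain_append]
    refine ⟨p.chain, q.chain, fun a ha b hb => ?_⟩
    rw [p.srcEq a ha, h]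
    simp [Path.rng, Option.mem_def.mp hb]
  srcEq := by
    intro a ha
    cases hq : q.edges with
    | nil =>
      rw [hq, List.append_nil] at ha
      have h0 : q.rng = q.src := by simp [Path.rng, hq]
      rw [p.srcEq a ha, h, h0]
    | cons f t =>
      apply q.srcEq
      rw [hq]
      rw [hq, List.getLast?_append_cons] at ha
      exact ha

/-- A graph is row-finite if every vertex receives finitely many edges. -/
def RowFinite (G : DGraph) : Prop := ∀ v : G.V, {e : G.E | G.r e = v}.Finite

/-- A graph has no sources if every vertex receives an edge. -/
def NoSources (G : DGraph) : Prop := ∀ v : G.V, ∃ e : G.E, G.r e = v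

/-- A graph is strongly connected if for all vertices `v, w` there is a path from `w` to `v`. -/
def StronglyConnected (G : DGraph) : Prop :=
  ∀ v w : G.V, ∃ p : G.Path, p.src = w ∧ p.rng = v

/-- The set of paths of length less than `n`. -/
abbrev PathLt (G : DGraph) (n : ℕ) := {p : G.Path // p.length < n}

/-- The graph `E(n)` of Kribs and Solel: vertices are paths of length `< n`, and edges
are pairs `(e, μ)` with `r(μ) = s(e)` and `|μ| < n`, with source `μ` and range `[eμ]_n`. -/
def Eln (G : DGraph) (n : ℕ) : DGraph where
  V := PathLt G n
  E := {q : G.E × G.Path // q.2.length + 1 ≤ n ∧ q.2.rng = G.s q.1}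
  s := fun q => ⟨q.1.2, Nat.lt_of_succ_le q.2.1⟩
  r := fun q =>
    if h : q.1.2.length + 1 < n then
      ⟨Path.cons q.1.1 q.1.2 q.2.2, by simpa using h⟩
    else
      ⟨Path.nil G (G.r q.1.1), Nat.lt_of_lt_of_le (Nat.succ_pos _) q.2.1⟩

/-- A vertex of `E`, regarded as a length-zero vertex of `E(n)`. -/
def vtx (G : DGraph) (n : ℕ) (hn : 0 < n) (v : G.V) : PathLt G n :=
  ⟨Path.nil G v, by simpa using hn⟩

/-- `d` is the greatest common divisor of the set `S` of natural numbers. -/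
def IsGCDOf (d : ℕ) (S : Set ℕ) : Prop :=
  (∀ k ∈ S, d ∣ k) ∧ ∀ c : ℕ, (∀ k ∈ S, c ∣ k) → c ∣ d

/-- The set of lengths of (nonempty) cycles of `G`. -/
def CycleLengths (G : DGraph) : Set ℕ :=
  {k | ∃ p : G.Path, p.rng = p.src ∧ p.edges ≠ [] ∧ p.length = k}

/-- The set of lengths of (nonempty) cycles of `G` based at `v`. -/
def CycleLengthsAt (G : DGraph) (v : G.V) : Set ℕ :=
  {k | ∃ p : G.Path, p.src = v ∧ p.rng = v ∧ p.edges ≠ [] ∧ p.length = k}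

/-- The relation `v ∼ w` iff there is a path from `w` to `v` whose length is divisible by `d`. -/
def SimRel (G : DGraph) (d : ℕ) (v w : G.V) : Prop :=
  ∃ p : G.Path, p.src = w ∧ p.rng = v ∧ d ∣ p.length

/-- The connected-component relation of a graph: the smallest equivalence relation
identifying the range and the source of each edge. -/
def Comp (G : DGraph) : G.V → G.V → Prop :=
  Relation.EqvGen (fun a b => ∃ f : G.E, G.r f = a ∧ G.s f = b)

/-- The adjacency matrix of `E(n)` acting on vectors indexed by `E^{<n}`. -/
noncomputable def Aact (G : DGraph) (n : ℕ) (g : PathLt G n → ℝ) (v : PathLt G n) : ℝ :=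
  ∑ᶠ (f : (Eln G n).E) (_ : (Eln G n).r f = v), g ((Eln G n).s f)

/-- The pushforward of a vector on `E^{<n}` along `ν ↦ [ν]_m`. -/
noncomputable def pushf (G : DGraph) (n m : ℕ) (g : PathLt G n → ℝ) (μ : PathLt G m) : ℝ :=
  ∑ᶠ (ν : PathLt G n) (_ : Path.trunc m ν.1 = μ.1), g ν

instance : TopologicalSpace G.Path := ⊥

/-- The inverse limit `lim← E^{<n_k}` along the truncation maps. -/
def InvLim (G : DGraph) (n : ℕ → ℕ) : Type :=
  {f : (k : ℕ) → PathLt G (n k) // ∀ k, Path.trunc (n k) (f (k+1)).1 = (f k).1}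

instance (G : DGraph) (n : ℕ → ℕ) : TopologicalSpace (InvLim G n) :=
  inferInstanceAs (TopologicalSpace
    {f : (k : ℕ) → PathLt G (n k) // ∀ k, Path.trunc (n k) (f (k+1)).1 = (f k).1})

noncomputable instance (G : DGraph) (n : ℕ → ℕ) : MeasurableSpace (InvLim G n) := borel _

end DGraph

/-!
An edge `(e, μ)` of `E(n)` either keeps the source of `μ`, or, when `|eμ| = n`, joins `μ` to
the vertex `r(e)`, which is reached from `s(μ)` by a path of length `n`; so a component never
leaves a `∼_n`-class. Conversely, following a path `σ` edge by edge in `E(n)` connects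
`[σ]_n` to `s(σ)`, which connects `r(σ)` to `s(σ)` when `n ∣ |σ|`. A path whose length is only
divisible by `gcd(P, n)` is completed to such a path by a loop, because the loop lengths at a
vertex, read mod `n`, form a subgroup of `ℤ/n` that contains every cycle length and hence
`gcd(P, n)`.
-/

namespace DGraph

variable {G : DGraph}

namespace Path

theorem ext' {p q : G.Path} (hsrc : p.src = q.src) (hedges : p.edges = q.edges) : p = q := by
  cases p; cases q; simp_all

theorem rng_tail_of_edges_eq_cons (p : G.Path) {e : G.E} {rest : List G.E}
    (hp : p.edges = e :: rest) : p.tail.rng = G.s e := by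
  cases rest with
  | nil => simpa [Path.tail, Path.rng, hp] using (p.srcEq e (by simp [hp])).symm
  | cons f t =>
    have hchain := p.chain
    rw [hp] at hchain
    simp [Path.tail, Path.rng, hp, (List.isChain_cons_cons.mp hchain).1]

theorem eq_cons_tail (p : G.Path) {e : G.E} {rest : List G.E} (hp : p.edges = e :: rest) :
    p = Path.cons e p.tail (p.rng_tail_of_edges_eq_cons hp) :=
  ext' rfl (by simp [Path.cons, Path.tail, hp])

@[elab_as_elim]
theorem induction_on {motive : G.Path → Prop} (p : G.Path)
    (nil : ∀ v, motive (Path.nil G v))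
    (cons : ∀ e p (h : p.rng = G.s e), motive p → motive (Path.cons e p h)) : motive p := by
  induction hp : p.edges generalizing p with
  | nil => exact (ext' rfl hp : p = Path.nil G p.src) ▸ nil p.src
  | cons e rest ih =>
    rw [p.eq_cons_tail hp]
    exact cons _ _ _ (ih p.tail (by simp [Path.tail, hp]))

@[simp] theorem length_take (p : G.Path) (k : ℕ) : (p.take k).length = min k p.length := by
  simp [Path.take, Path.length]

@[simp] theorem rng_take (p : G.Path) (k : ℕ) : (p.take k).rng = p.rng := by
  cases k <;> cases he : p.edges <;> simp [Path.take, Path.rng, he]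

theorem take_zero (p : G.Path) : p.take 0 = Path.nil G p.rng := by
  apply ext' <;> simp [Path.take, Path.nil, Path.rng]

theorem take_length (p : G.Path) : p.take p.length = p :=
  ext' (by simp [Path.take, Path.length]) (by simp [Path.take, Path.length])

theorem take_succ_cons (e : G.E) (p : G.Path) (h : p.rng = G.s e) (k : ℕ) :
    (Path.cons e p h).take (k + 1) = Path.cons e (p.take k) ((p.rng_take k).trans h) :=
  ext' rfl rfl

@[simp] theorem src_append (p q : G.Path) (h : p.src = q.rng) : (p.append q h).src = q.src := rfl

@[simp] theorem rng_append (p q : G.Path) (h : p.src = q.rng) : (p.append q h).rng = p.rng := by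
  cases hp : p.edges <;> simp [Path.append, Path.rng, hp, h]

@[simp] theorem length_append (p q : G.Path) (h : p.src = q.rng) :
    (p.append q h).length = p.length + q.length := by
  simp [Path.append, Path.length]

theorem length_trunc_lt {n : ℕ} (hn : 0 < n) (p : G.Path) : (p.trunc n).length < n := by
  simpa [Path.trunc] using Or.inl (Nat.mod_lt _ hn)

theorem trunc_of_length_lt {n : ℕ} {p : G.Path} (h : p.length < n) : p.trunc n = p := by
  rw [Path.trunc, Nat.mod_eq_of_lt h, take_length]

theorem trunc_of_dvd_length {n : ℕ} {p : G.Path} (h : n ∣ p.length) :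
    p.trunc n = Path.nil G p.rng := by
  rw [Path.trunc, Nat.mod_eq_zero_of_dvd h, take_zero]

end Path

section SimRel

variable {d : ℕ}

theorem SimRel.refl (v : G.V) : SimRel G d v v :=
  ⟨Path.nil G v, rfl, rfl, dvd_zero d⟩

theorem SimRel.trans {u v w : G.V} (huv : SimRel G d u v) (hvw : SimRel G d v w) :
    SimRel G d u w := by
  obtain ⟨p, rfl, rfl, hp⟩ := huv
  obtain ⟨q, rfl, hq, hq'⟩ := hvw
  exact ⟨p.append q hq.symm, rfl, by simp, by simpa using dvd_add hp hq'⟩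

theorem SimRel.of_dvd {d' : ℕ} (hd : d ∣ d') {v w : G.V} (h : SimRel G d' v w) :
    SimRel G d v w :=
  let ⟨p, hs, hr, hp⟩ := h
  ⟨p, hs, hr, hd.trans hp⟩

theorem dvd_length_of_rng_eq_src (hd : ∀ k ∈ CycleLengths G, d ∣ k) {c : G.Path}
    (hc : c.rng = c.src) : d ∣ c.length := by
  by_cases hnil : c.edges = []
  · simp [Path.length, hnil]
  · exact hd _ ⟨c, hc, hnil, rfl⟩

theorem SimRel.symm (hsc : StronglyConnected G) (hd : ∀ k ∈ CycleLengths G, d ∣ k)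
    {v w : G.V} (h : SimRel G d v w) : SimRel G d w v := by
  obtain ⟨p, rfl, rfl, hp⟩ := h
  obtain ⟨q, hqs, hqr⟩ := hsc p.src p.rng
  refine ⟨q, hqs, hqr, ?_⟩
  have hcycle := dvd_length_of_rng_eq_src hd (c := p.append q hqr.symm) (by simp [hqs])
  simpa using (Nat.dvd_add_right hp).mp (by simpa using hcycle)

theorem simRel_equivalence (hsc : StronglyConnected G) (hd : ∀ k ∈ CycleLengths G, d ∣ k) :
    Equivalence (SimRel G d) :=
  ⟨SimRel.refl, SimRel.symm hsc hd, SimRel.trans⟩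

end SimRel

theorem IsGCDOf.insert_gcd {P : ℕ} {S : Set ℕ} (hP : IsGCDOf P S) (n : ℕ) :
    IsGCDOf (Nat.gcd P n) (insert n S) := by
  refine ⟨?_, fun c hc => Nat.dvd_gcd (hP.2 c fun k hk => hc k (Or.inr hk)) (hc n (Or.inl rfl))⟩
  rintro k (rfl | hk)
  · exact Nat.gcd_dvd_right P k
  · exact (Nat.gcd_dvd_left P n).trans (hP.1 k hk)

theorem IsGCDOf.natCast_mem {P : ℕ} {S : Set ℕ} (hP : IsGCDOf P S) {H : AddSubgroup ℤ}
    (hS : ∀ k ∈ S, (k : ℤ) ∈ H) : (P : ℤ) ∈ H := by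
  obtain ⟨g, rfl⟩ := Int.subgroup_cyclic H
  simp only [← AddSubgroup.zmultiples_eq_closure, Int.mem_zmultiples_iff] at hS ⊢
  exact Int.natAbs_dvd.mp (Int.natCast_dvd_natCast.mpr
    (hP.2 g.natAbs fun k hk => Int.natAbs_dvd_natAbs.mpr (hS k hk)))

def loopLengths (G : DGraph) (w : G.V) : AddSubmonoid ℕ where
  carrier := {k | ∃ c : G.Path, c.src = w ∧ c.rng = w ∧ c.length = k}
  zero_mem' := ⟨Path.nil G w, rfl, rfl, rfl⟩
  add_mem' := by
    rintro _ _ ⟨c, hcs, hcr, rfl⟩ ⟨c', hcs', hcr', rfl⟩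
    exact ⟨c.append c' (hcs.trans hcr'.symm), hcs', by simp [hcr], by simp⟩

theorem exists_loopLengths_eq_add (hsc : StronglyConnected G) (w : G.V) {k : ℕ}
    (hk : k ∈ CycleLengths G) :
    ∃ a ∈ loopLengths G w, ∃ b ∈ loopLengths G w, a = b + k := by
  obtain ⟨c, hc, -, rfl⟩ := hk
  obtain ⟨g, hgs, hgr⟩ := hsc c.src w
  obtain ⟨h, hhs, hhr⟩ := hsc w c.src
  let viaCycle := h.append (c.append g hgr.symm) (by simp [hc, hhs])
  let direct := h.append g (by rw [hhs, hgr])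
  refine ⟨viaCycle.length, ⟨viaCycle, by simp [viaCycle, hgs], by simp [viaCycle, hhr], rfl⟩,
    direct.length, ⟨direct, by simp [direct, hgs], by simp [direct, hhr], rfl⟩, ?_⟩
  simp only [viaCycle, direct, Path.length_append]
  ring

theorem neg_mem_loopLengths_map (hsc : StronglyConnected G) {P n : ℕ} [NeZero n]
    (hP : IsGCDOf P (CycleLengths G)) (w : G.V) {ℓ : ℕ} (hℓ : Nat.gcd P n ∣ ℓ) :
    -(ℓ : ZMod n) ∈ (loopLengths G w).map (Nat.castAddMonoidHom (ZMod n)) := by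
  set L := (loopLengths G w).map (Nat.castAddMonoidHom (ZMod n))
  -- a submonoid of a finite group is a subgroup
  have hclosure : (AddSubgroup.closure (L : Set (ZMod n))).toAddSubmonoid = L := by
    rw [AddSubgroup.closure_toAddSubmonoid_of_finite, AddSubmonoid.closure_eq]
  set K := (AddSubgroup.closure (L : Set (ZMod n))).comap (Int.castAddHom (ZMod n))
  have hloop : ∀ a ∈ loopLengths G w, (a : ℤ) ∈ K := fun a ha => by
    change ((a : ℤ) : ZMod n) ∈ AddSubgroup.closure (L : Set (ZMod n))
    rw [Int.cast_natCast]
    exact AddSubgroup.subset_closure (AddSubmonoid.mem_map_of_mem _ ha)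
  have hgens : ∀ k ∈ insert n (CycleLengths G), (k : ℤ) ∈ K := by
    rintro k (rfl | hk)
    · simp [K]
    · obtain ⟨a, ha, b, hb, rfl⟩ := exists_loopLengths_eq_add hsc w hk
      simpa using sub_mem (hloop _ ha) (hloop b hb)
  obtain ⟨m, rfl⟩ := hℓ
  have hmem : -((Nat.gcd P n * m : ℕ) : ℤ) ∈ K := by
    simpa [mul_comm] using neg_mem (zsmul_mem ((hP.insert_gcd n).natCast_mem hgens) m)
  rw [← hclosure]
  simpa [K] using hmem

theorem SimRel.of_gcd (hsc : StronglyConnected G) {P n : ℕ} (hn : 0 < n)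
    (hP : IsGCDOf P (CycleLengths G)) {v w : G.V} (h : SimRel G (Nat.gcd P n) v w) :
    SimRel G n v w := by
  have : NeZero n := ⟨hn.ne'⟩
  obtain ⟨τ, rfl, rfl, hτ⟩ := h
  obtain ⟨_, ⟨c, hcs, hcr, rfl⟩, hc⟩ := neg_mem_loopLengths_map hsc hP τ.src hτ
  refine ⟨τ.append c hcr.symm, hcs, by simp, ?_⟩
  rw [Path.length_append, ← ZMod.natCast_eq_zero_iff, Nat.cast_add]
  simp_all

section Eln

variable {n : ℕ}

def Path.truncLt (hn : 0 < n) (p : G.Path) : PathLt G n :=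
  ⟨p.trunc n, p.length_trunc_lt hn⟩

theorem Path.truncLt_nil (hn : 0 < n) (v : G.V) : (Path.nil G v).truncLt hn = vtx G n hn v :=
  Subtype.ext (Path.trunc_of_length_lt hn)

theorem comp_truncLt_cons (hn : 0 < n) (e : G.E) (p : G.Path) (h : p.rng = G.s e) :
    Comp (Eln G n) ((Path.cons e p h).truncLt hn) (p.truncLt hn) := by
  have hlen : (p.trunc n).length = p.length % n := by simp [Path.trunc, Nat.mod_le]
  have hmod : (p.length + 1) % n = (p.length % n + 1) % n := (Nat.mod_add_mod _ _ _).symm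
  refine Relation.EqvGen.rel _ _
    ⟨⟨(e, p.trunc n), p.length_trunc_lt hn, by simp [Path.trunc, h]⟩, Subtype.ext ?_, rfl⟩
  change (dite ((p.trunc n).length + 1 < n) _ _ : PathLt G n).1
    = (Path.cons e p h).take ((p.length + 1) % n)
  rw [hmod]
  split_ifs with hlt <;> rw [hlen] at hlt
  · rw [Nat.mod_eq_of_lt hlt, Path.take_succ_cons]
    rfl
  · rw [show p.length % n + 1 = n by have := Nat.mod_lt p.length hn; omega, Nat.mod_self,
      Path.take_zero]
    rfl

theorem comp_truncLt_vtx (hn : 0 < n) (p : G.Path) :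
    Comp (Eln G n) (p.truncLt hn) (vtx G n hn p.src) := by
  induction p using Path.induction_on with
  | nil v => exact Path.truncLt_nil hn v ▸ Relation.EqvGen.refl _
  | cons e p h ih => exact Relation.EqvGen.trans _ _ _ (comp_truncLt_cons hn e p h) ih

theorem comp_vtx_src (μ : (Eln G n).V) :
    Comp (Eln G n) μ (vtx G n (Nat.zero_lt_of_lt μ.2) μ.1.src) := by
  have hcomp := comp_truncLt_vtx (Nat.zero_lt_of_lt μ.2) μ.1
  rwa [show μ.1.truncLt _ = μ from Subtype.ext (Path.trunc_of_length_lt μ.2)] at hcomp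

theorem comp_vtx_of_simRel (hn : 0 < n) {v w : G.V} (h : SimRel G n v w) :
    Comp (Eln G n) (vtx G n hn v) (vtx G n hn w) := by
  obtain ⟨σ, rfl, rfl, hσ⟩ := h
  have hσ' : σ.truncLt hn = vtx G n hn σ.rng := Subtype.ext (Path.trunc_of_dvd_length hσ)
  exact hσ' ▸ comp_truncLt_vtx hn σ

theorem simRel_src_of_edge (f : (Eln G n).E) :
    SimRel G n ((Eln G n).r f).1.src ((Eln G n).s f).1.src := by
  obtain ⟨⟨e, μ⟩, hle, hμ⟩ := f
  change SimRel G n (dite _ _ _ : PathLt G n).1.src μ.src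
  split_ifs with hlt
  · exact SimRel.refl _
  · have hlen : μ.length + 1 = n := by simp only at hle hlt; omega
    exact ⟨Path.cons e μ hμ, rfl, rfl, by rw [Path.length_cons, hlen]⟩

end Eln

end DGraph

open DGraph in
theorem Eln_components_are_source_classes_general (G : DGraph)
    (hsc : StronglyConnected G)
    (n : ℕ) (P : ℕ) (hP : IsGCDOf P (CycleLengths G)) :
    ∀ p q : (Eln G n).V, Comp (Eln G n) p q ↔ SimRel G (Nat.gcd P n) p.1.src q.1.src := by
  intro p q
  have hn : 0 < n := Nat.zero_lt_of_lt p.2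
  have hequiv : Equivalence (SimRel G (Nat.gcd P n)) :=
    simRel_equivalence hsc fun k hk => (Nat.gcd_dvd_left P n).trans (hP.1 k hk)
  constructor
  · intro hpq
    refine (hequiv.comap fun μ : (Eln G n).V => μ.1.src).eqvGen_iff.mp (hpq.mono ?_)
    rintro _ _ ⟨f, rfl, rfl⟩
    exact (simRel_src_of_edge f).of_dvd (Nat.gcd_dvd_right P n)
  · intro hsim
    have hvtx := comp_vtx_of_simRel hn (hsim.of_gcd hsc hn hP)
    exact ((comp_vtx_src p).trans _ _ _ hvtx).trans _ _ _ (comp_vtx_src q).symm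

open DGraph in
/-- Let `E` be a strongly connected finite directed graph with no sources
and `n ≥ 1`.  The connected components of `E(n)` are exactly the sets
`{μ ∈ E^{<n} : s(μ) ∈ Λ}` indexed by the equivalence classes `Λ` of `∼_n` on `E^0`:
two vertices of `E(n)` lie in the same component iff their sources are `∼_n`-equivalent. -/
theorem Eln_components_are_source_classes (G : DGraph) [Finite G.V] [Finite G.E]
    (hsc : StronglyConnected G) (hns : NoSources G)
    (n : ℕ) (hn : 0 < n) (P : ℕ) (hP : IsGCDOf P (CycleLengths G)) :
    ∀ p q : (Eln G n).V, Comp (Eln G n) p q ↔ SimRel G (Nat.gcd P n) p.1.src q.1.src :=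
  Eln_components_are_source_classes_general G hsc n P hP
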